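/- (Thompson interlacing) Let N ≥ 2, let X be an N×N complex matrix with singular values γ₁ ≥ … ≥ γ_N ≥ 0, and let X' be the (N−1)×(N−1) matrix obtained from X by deleting one row and one column, with singular values s₁ ≥ … ≥ s_{N−1} ≥ 0. Then s_k ≤ γ_k for all 1 ≤ k ≤ N−1, and γ_{k+2} ≤ s_k for all 1 ≤ k ≤ N−2. -/

import Mathlib

/-!
The squared singular values of `X` are the eigenvalues of `X * Xᴴ`. Deleting a row of `X`
replaces `X * Xᴴ` by a principal submatrix, whose eigenvalues interlace those of `X * Xᴴ`
(Cauchy). Deleting a column `w` replaces it by `X * Xᴴ - w * wᴴ`, and a positive rank-one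
perturbation moves each eigenvalue by at most one index (Weyl). Both interlacing statements
follow from one half of the Courant–Fischer principle: if `r * ‖x‖ ^ 2 ≤ xᴴ A x` on a
subspace of dimension `k + 1`, then `r` is at most the `k`-th largest eigenvalue of `A`.
-/

open Matrix

/-- Eigenvalues of a (Hermitian) complex matrix, listed in decreasing order. -/
noncomputable def eigVec {k : ℕ} (X : Matrix (Fin k) (Fin k) ℂ) (hX : X.IsHermitian) :
    Fin k → ℝ :=
  fun i => hX.eigenvalues (Tuple.sort hX.eigenvalues i.rev)

/-- The `i`-th (0-based) singular value of a rectangular complex matrix: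
the square root of the `i`-th largest eigenvalue of `Y * Yᴴ` (and `0` for `i ≥ a`). -/
noncomputable def sval {a b : ℕ} (Y : Matrix (Fin a) (Fin b) ℂ) (i : ℕ) : ℝ :=
  if h : i < a then
    Real.sqrt (eigVec (Y * Yᴴ) (Matrix.isHermitian_mul_conjTranspose_self Y) ⟨i, h⟩)
  else 0

/-- The Horn cone `Horn(k)`. -/
def Horn (k : ℕ) : Set ((Fin k → ℝ) × (Fin k → ℝ) × (Fin k → ℝ)) :=
  { v | ∃ (X Y : Matrix (Fin k) (Fin k) ℂ) (hX : X.IsHermitian) (hY : Y.IsHermitian),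
      v.1 = eigVec X hX ∧ v.2.1 = eigVec Y hY ∧ v.2.2 = eigVec (X + Y) (hX.add hY) }

/-- The Littlewood–Richardson cone `LR(m,n)`. -/
def LRcone (m n : ℕ) : Set ((Fin (m + n) → ℝ) × (Fin m → ℝ) × (Fin n → ℝ)) :=
  { v | ∃ (M : Matrix (Fin (m + n)) (Fin (m + n)) ℂ) (hM : M.IsHermitian),
      v.1 = eigVec M hM ∧
      v.2.1 = eigVec (M.submatrix (Fin.castAdd n) (Fin.castAdd n))
        (hM.submatrix (Fin.castAdd n)) ∧
      v.2.2 = eigVec (M.submatrix (Fin.natAdd m) (Fin.natAdd m))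
        (hM.submatrix (Fin.natAdd m)) }

/-- Top-left `p × p` block. -/
def blockTL (p q : ℕ) (X : Matrix (Fin (p + q)) (Fin (p + q)) ℂ) : Matrix (Fin p) (Fin p) ℂ :=
  X.submatrix (Fin.castAdd q) (Fin.castAdd q)

/-- Top-right `p × q` block. -/
def blockTR (p q : ℕ) (X : Matrix (Fin (p + q)) (Fin (p + q)) ℂ) : Matrix (Fin p) (Fin q) ℂ :=
  X.submatrix (Fin.castAdd q) (Fin.natAdd p)

/-- Bottom-left `q × p` block. -/
def blockBL (p q : ℕ) (X : Matrix (Fin (p + q)) (Fin (p + q)) ℂ) : Matrix (Fin q) (Fin p) ℂ :=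
  X.submatrix (Fin.natAdd p) (Fin.castAdd q)

/-- Bottom-right `q × q` block. -/
def blockBR (p q : ℕ) (X : Matrix (Fin (p + q)) (Fin (p + q)) ℂ) : Matrix (Fin q) (Fin q) ℂ :=
  X.submatrix (Fin.natAdd p) (Fin.natAdd p)

/-- `λ* = (−λ_k, …, −λ_1)`. -/
def starVec {k : ℕ} (x : Fin k → ℝ) : Fin k → ℝ := fun i => -x i.rev

/-- `ŝ^{p,q} = (s₁, …, s_q, 0, …, 0, −s_q, …, −s₁) ∈ ℝ^{p+q}` (with `p − q` middle zeros). -/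
noncomputable def hatPQ (p q : ℕ) (s : Fin q → ℝ) : Fin (p + q) → ℝ :=
  fun i =>
    if h : (i : ℕ) < q then s ⟨i, h⟩
    else if h' : (i : ℕ) < p then 0
    else -s ⟨p + q - 1 - i, by have := i.isLt; omega⟩

/-- The cone `A(p,q)`: pairs `(e(X), s(X₁₂))` for `X` Hermitian of size `p+q`. -/
def coneA (p q : ℕ) : Set ((Fin (p + q) → ℝ) × (Fin q → ℝ)) :=
  { v | ∃ (X : Matrix (Fin (p + q)) (Fin (p + q)) ℂ) (hX : X.IsHermitian),
      v.1 = eigVec X hX ∧ ∀ i : Fin q, v.2 i = sval (blockTR p q X) (i : ℕ) }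

/-- The cone `S(p,q)`: triples `(s(X), s(X₁₂), s(X₂₁))`. -/
def coneS (p q : ℕ) : Set ((Fin (p + q) → ℝ) × (Fin q → ℝ) × (Fin q → ℝ)) :=
  { v | ∃ X : Matrix (Fin (p + q)) (Fin (p + q)) ℂ,
      (∀ i : Fin (p + q), v.1 i = sval X (i : ℕ)) ∧
      (∀ i : Fin q, v.2.1 i = sval (blockTR p q X) (i : ℕ)) ∧
      (∀ i : Fin q, v.2.2 i = sval (blockBL p q X) (i : ℕ)) }

/-- The cone `T(p,q)`: triples `(s(X), s(X₁₁), s(X₂₂))`. -/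
def coneT (p q : ℕ) : Set ((Fin (p + q) → ℝ) × (Fin p → ℝ) × (Fin q → ℝ)) :=
  { v | ∃ X : Matrix (Fin (p + q)) (Fin (p + q)) ℂ,
      (∀ i : Fin (p + q), v.1 i = sval X (i : ℕ)) ∧
      (∀ i : Fin p, v.2.1 i = sval (blockTL p q X) (i : ℕ)) ∧
      (∀ i : Fin q, v.2.2 i = sval (blockBR p q X) (i : ℕ)) }

/-- `μ(A) = (a_r − r ≥ … ≥ a₂ − 2 ≥ a₁ − 1)` as a decreasing real vector, for
`A = {a₁ < … < a_r}` a subset of `[n]` (0-based indexing internally). -/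
noncomputable def muVec {n r : ℕ} (A : Finset (Fin n)) (h : A.card = r) : Fin r → ℝ :=
  fun k => (((A.orderIsoOfFin h k.rev : Fin n) : ℕ) : ℝ) - ((k.rev : ℕ) : ℝ)

/-- `A^o = {ℓ + 1 − a : a ∈ A}` inside `[ℓ]`. -/
def opp {n : ℕ} (A : Finset (Fin n)) : Finset (Fin n) := A.image Fin.rev

/-- `|s|_{K ∩ [q]}` where `K ⊆ [n]`, `s ∈ ℝ^q` and `[q]` is viewed inside `[n]`. -/
noncomputable def sumRestr {n q : ℕ} (s : Fin q → ℝ) (K : Finset (Fin n)) : ℝ :=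
  ∑ i ∈ K, (if h : (i : ℕ) < q then s ⟨i, h⟩ else 0)

/-- The augmented matrix `Ŷ^{p,q} = [[0, Y], [Yᴴ, 0]]` of size `p + q`. -/
def hatM (p q : ℕ) (Y : Matrix (Fin p) (Fin q) ℂ) : Matrix (Fin (p + q)) (Fin (p + q)) ℂ :=
  Matrix.reindex finSumFinEquiv finSumFinEquiv (Matrix.fromBlocks 0 Y Yᴴ 0)

noncomputable section

open Module Submodule

def quadForm {n : ℕ} (A : Matrix (Fin n) (Fin n) ℂ) (x : Fin n → ℂ) : ℝ :=
  (star x ⬝ᵥ A *ᵥ x).re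

lemma finrank_add_finrank_le_finrank_inf_add {K E : Type*} [DivisionRing K] [AddCommGroup E]
    [Module K E] [FiniteDimensional K E] (V W : Submodule K E) :
    finrank K V + finrank K W ≤ finrank K ↥(V ⊓ W) + finrank K E := by
  rw [← finrank_sup_add_finrank_inf_eq]
  have := (V ⊔ W).finrank_le
  omega

section QuadForm

variable {m n : ℕ}

lemma quadForm_add (A B : Matrix (Fin n) (Fin n) ℂ) (x : Fin n → ℂ) :
    quadForm (A + B) x = quadForm A x + quadForm B x := by
  simp only [quadForm, add_mulVec, dotProduct_add, Complex.add_re]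

lemma quadForm_vecMulVec (w x : Fin n → ℂ) :
    quadForm (vecMulVec w (star w)) x = Complex.normSq (star w ⬝ᵥ x) := by
  rw [quadForm, vecMulVec_mulVec, dotProduct_smul, op_smul_eq_mul, star_dotProduct,
    Complex.star_def, Complex.conj_mul', ← Complex.ofReal_pow, Complex.ofReal_re,
    Complex.normSq_eq_norm_sq]

lemma quadForm_conjTranspose_mul_mul (A : Matrix (Fin m) (Fin m) ℂ)
    (P : Matrix (Fin m) (Fin n) ℂ) (x : Fin n → ℂ) :
    quadForm (Pᴴ * A * P) x = quadForm A (P *ᵥ x) := by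
  rw [quadForm, quadForm, ← mulVec_mulVec, ← mulVec_mulVec, dotProduct_mulVec, star_mulVec]

lemma quadForm_eq_re_inner (A : Matrix (Fin n) (Fin n) ℂ) (x : EuclideanSpace ℂ (Fin n)) :
    quadForm A x = (inner ℂ x (toEuclideanLin A x)).re := by
  rw [quadForm, EuclideanSpace.inner_eq_star_dotProduct, dotProduct_comm]
  rfl

lemma norm_sq_eq_quadForm_one (x : EuclideanSpace ℂ (Fin n)) : ‖x‖ ^ 2 = quadForm 1 x := by
  rw [quadForm, one_mulVec, ← inner_self_eq_norm_sq (𝕜 := ℂ),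
    EuclideanSpace.inner_eq_star_dotProduct, dotProduct_comm]
  rfl

lemma norm_toEuclideanLin_of_conjTranspose_mul_self {P : Matrix (Fin m) (Fin n) ℂ}
    (hP : Pᴴ * P = 1) (x : EuclideanSpace ℂ (Fin n)) : ‖toEuclideanLin P x‖ = ‖x‖ := by
  refine (pow_left_inj₀ (norm_nonneg _) (norm_nonneg _) two_ne_zero).1 ?_
  rw [norm_sq_eq_quadForm_one, norm_sq_eq_quadForm_one]
  change quadForm 1 (P *ᵥ x) = _
  rw [← quadForm_conjTranspose_mul_mul, Matrix.mul_one, hP]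

lemma toEuclideanLin_injective_of_conjTranspose_mul_self {P : Matrix (Fin m) (Fin n) ℂ}
    (hP : Pᴴ * P = 1) : Function.Injective (toEuclideanLin P) :=
  (injective_iff_map_eq_zero _).2 fun x hx => by
    rw [← norm_eq_zero, ← norm_toEuclideanLin_of_conjTranspose_mul_self hP, hx, norm_zero]

end QuadForm

section SortedEigenbasis

variable {n : ℕ} {A : Matrix (Fin n) (Fin n) ℂ} (hA : A.IsHermitian)

def sortedEigenbasis : OrthonormalBasis (Fin n) ℂ (EuclideanSpace ℂ (Fin n)) :=
  hA.eigenvectorBasis.reindex (Fin.revPerm.trans (Tuple.sort hA.eigenvalues)).symm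

lemma toEuclideanLin_sortedEigenbasis (i : Fin n) :
    toEuclideanLin A (sortedEigenbasis hA i) = eigVec A hA i • sortedEigenbasis hA i := by
  have hsort : sortedEigenbasis hA i = hA.eigenvectorBasis (Tuple.sort hA.eigenvalues i.rev) := by
    simp [sortedEigenbasis]
  rw [hsort, toLpLin_apply, hA.mulVec_eigenvectorBasis]
  rfl

lemma eigVec_antitone : Antitone (eigVec A hA) :=
  fun _ _ hij => Tuple.monotone_sort hA.eigenvalues (Fin.rev_le_rev.mpr hij)

lemma quadForm_eq_sum_eigVec (x : EuclideanSpace ℂ (Fin n)) :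
    quadForm A x = ∑ i, eigVec A hA i * ‖(sortedEigenbasis hA).repr x i‖ ^ 2 := by
  have hsymm : (toEuclideanLin A).IsSymmetric := isSymmetric_toEuclideanLin_iff.mpr hA
  have hcoord (i : Fin n) :
      inner ℂ (sortedEigenbasis hA i) (toEuclideanLin A x) =
        eigVec A hA i * inner ℂ (sortedEigenbasis hA i) x := by
    rw [← hsymm, toEuclideanLin_sortedEigenbasis, RCLike.real_smul_eq_coe_smul (K := ℂ),
      inner_smul_real_left, Complex.real_smul]
  rw [quadForm_eq_re_inner, ← (sortedEigenbasis hA).sum_inner_mul_inner, Complex.re_sum]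
  refine Finset.sum_congr rfl fun i _ => ?_
  rw [hcoord, OrthonormalBasis.repr_apply_apply, ← inner_conj_symm, mul_left_comm,
    Complex.conj_mul', ← Complex.ofReal_pow, ← Complex.ofReal_mul, Complex.ofReal_re]

lemma sortedEigenbasis_repr_eq_zero {S : Set (Fin n)} {x : EuclideanSpace ℂ (Fin n)}
    (hx : x ∈ span ℂ (sortedEigenbasis hA '' S)) {i : Fin n} (hi : i ∉ S) :
    (sortedEigenbasis hA).repr x i = 0 := by
  rw [OrthonormalBasis.repr_apply_apply]
  refine span_induction (fun _ ⟨j, hj, hji⟩ => ?_) (inner_zero_right _)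
    (fun _ _ _ _ hx hy => by rw [inner_add_right, hx, hy, add_zero])
    (fun c _ _ hx => by rw [inner_smul_right, hx, mul_zero]) hx
  rw [← hji]
  exact (sortedEigenbasis hA).orthonormal.2 fun h => hi (h ▸ hj)

lemma finrank_span_sortedEigenbasis (S : Finset (Fin n)) :
    finrank ℂ (span ℂ (sortedEigenbasis hA '' S)) = S.card := by
  have hli := (sortedEigenbasis hA).orthonormal.linearIndependent.comp _
    (Subtype.val_injective (p := (· ∈ S)))
  rw [Set.image_eq_range]
  exact (finrank_span_eq_card hli).trans (by simp)

end SortedEigenbasis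

section MinMax

variable {n : ℕ} {A : Matrix (Fin n) (Fin n) ℂ} (hA : A.IsHermitian)

lemma quadForm_le_of_mem_span {S : Finset (Fin n)} {r : ℝ} (hr : ∀ i ∈ S, eigVec A hA i ≤ r)
    {x : EuclideanSpace ℂ (Fin n)} (hx : x ∈ span ℂ (sortedEigenbasis hA '' S)) :
    quadForm A x ≤ r * ‖x‖ ^ 2 := by
  rw [quadForm_eq_sum_eigVec hA, ← (sortedEigenbasis hA).repr.norm_map,
    EuclideanSpace.norm_sq_eq, Finset.mul_sum]
  refine Finset.sum_le_sum fun i _ => ?_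
  by_cases hi : i ∈ S
  · exact mul_le_mul_of_nonneg_right (hr i hi) (sq_nonneg _)
  · simp [sortedEigenbasis_repr_eq_zero hA hx hi]

lemma le_quadForm_of_mem_span {S : Finset (Fin n)} {r : ℝ} (hr : ∀ i ∈ S, r ≤ eigVec A hA i)
    {x : EuclideanSpace ℂ (Fin n)} (hx : x ∈ span ℂ (sortedEigenbasis hA '' S)) :
    r * ‖x‖ ^ 2 ≤ quadForm A x := by
  rw [quadForm_eq_sum_eigVec hA, ← (sortedEigenbasis hA).repr.norm_map,
    EuclideanSpace.norm_sq_eq, Finset.mul_sum]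
  refine Finset.sum_le_sum fun i _ => ?_
  by_cases hi : i ∈ S
  · exact mul_le_mul_of_nonneg_right (hr i hi) (sq_nonneg _)
  · simp [sortedEigenbasis_repr_eq_zero hA hx hi]

def topEigenspan (k : ℕ) : Submodule ℂ (EuclideanSpace ℂ (Fin n)) :=
  span ℂ (sortedEigenbasis hA '' ↑({i | (i : ℕ) < k} : Finset (Fin n)))

lemma finrank_topEigenspan {k : ℕ} (hk : k ≤ n) : finrank ℂ (topEigenspan hA k) = k := by
  rw [topEigenspan, finrank_span_sortedEigenbasis, Fin.card_filter_val_lt, min_eq_right hk]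

lemma eigVec_mul_norm_sq_le_quadForm (i : Fin n) {x : EuclideanSpace ℂ (Fin n)}
    (hx : x ∈ topEigenspan hA (i + 1)) : eigVec A hA i * ‖x‖ ^ 2 ≤ quadForm A x :=
  le_quadForm_of_mem_span hA (fun j hj => eigVec_antitone hA <| by
    simp only [Finset.mem_filter, Finset.mem_univ, true_and] at hj
    exact Fin.le_def.2 (by omega)) hx

lemma exists_ne_zero_quadForm_le (i : Fin n) {V : Submodule ℂ (EuclideanSpace ℂ (Fin n))}
    (hV : (i : ℕ) + 1 ≤ finrank ℂ V) :
    ∃ x ∈ V, x ≠ 0 ∧ quadForm A x ≤ eigVec A hA i * ‖x‖ ^ 2 := by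
  set L := span ℂ (sortedEigenbasis hA '' ↑(Finset.Ici i))
  have hL : finrank ℂ L = n - i := by rw [finrank_span_sortedEigenbasis, Fin.card_Ici]
  have hVL : ¬ Disjoint V L := fun hd => by
    have := finrank_add_finrank_le_of_disjoint hd
    rw [finrank_euclideanSpace_fin] at this
    omega
  obtain ⟨x, hxV, hxL, hx0⟩ : ∃ x ∈ V, x ∈ L ∧ x ≠ 0 := by
    simpa [disjoint_def] using hVL
  exact ⟨x, hxV, hx0, quadForm_le_of_mem_span hA
    (fun j hj => eigVec_antitone hA (Finset.mem_Ici.1 hj)) hxL⟩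

/-- One half of the Courant–Fischer min-max principle. -/
theorem le_eigVec_of_le_quadForm (i : Fin n) {r : ℝ}
    {V : Submodule ℂ (EuclideanSpace ℂ (Fin n))} (hV : (i : ℕ) + 1 ≤ finrank ℂ V)
    (h : ∀ x ∈ V, r * ‖x‖ ^ 2 ≤ quadForm A x) : r ≤ eigVec A hA i := by
  obtain ⟨x, hxV, hx0, hx⟩ := exists_ne_zero_quadForm_le hA i hV
  have hpos : 0 < ‖x‖ ^ 2 := by positivity
  exact le_of_mul_le_mul_right ((h x hxV).trans hx) hpos

end MinMax

section Interlacing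

variable {m n : ℕ}

lemma eigVec_congr {A B : Matrix (Fin n) (Fin n) ℂ} (h : A = B) (hA : A.IsHermitian)
    (hB : B.IsHermitian) : eigVec A hA = eigVec B hB := by
  subst h
  rfl

theorem eigVec_le_eigVec_of_quadForm_le {A B : Matrix (Fin n) (Fin n) ℂ} (hA : A.IsHermitian)
    (hB : B.IsHermitian) (h : ∀ x, quadForm A x ≤ quadForm B x) (i : Fin n) :
    eigVec A hA i ≤ eigVec B hB i :=
  le_eigVec_of_le_quadForm hB i (finrank_topEigenspan hA i.isLt).ge
    fun x hx => (eigVec_mul_norm_sq_le_quadForm hA i hx).trans (h x)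

theorem eigVec_conjTranspose_mul_mul_le {A : Matrix (Fin m) (Fin m) ℂ} (hA : A.IsHermitian)
    {P : Matrix (Fin m) (Fin n) ℂ} (hP : Pᴴ * P = 1) (hPAP : (Pᴴ * A * P).IsHermitian)
    {i : Fin n} {j : Fin m} (hji : (j : ℕ) ≤ i) :
    eigVec (Pᴴ * A * P) hPAP i ≤ eigVec A hA j := by
  set W := topEigenspan hPAP (i + 1)
  have hinj := toEuclideanLin_injective_of_conjTranspose_mul_self hP
  have hV : finrank ℂ (W.map (toEuclideanLin P)) = i + 1 := by
    rw [← (W.equivMapOfInjective _ hinj).finrank_eq, finrank_topEigenspan hPAP i.isLt]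
  refine le_eigVec_of_le_quadForm hA j (by rw [hV]; omega) ?_
  rintro _ ⟨x, hx, rfl⟩
  rw [norm_toEuclideanLin_of_conjTranspose_mul_self hP]
  exact (eigVec_mul_norm_sq_le_quadForm hPAP i hx).trans_eq
    (quadForm_conjTranspose_mul_mul A P x)

theorem eigVec_le_eigVec_conjTranspose_mul_mul {A : Matrix (Fin m) (Fin m) ℂ}
    (hA : A.IsHermitian) {P : Matrix (Fin m) (Fin n) ℂ} (hP : Pᴴ * P = 1)
    (hPAP : (Pᴴ * A * P).IsHermitian) {i : Fin n} {j : Fin m} (hij : (i : ℕ) + m ≤ j + n) :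
    eigVec A hA j ≤ eigVec (Pᴴ * A * P) hPAP i := by
  set φ := toEuclideanLin P
  set W := topEigenspan hA (j + 1)
  have hW : finrank ℂ W = j + 1 := finrank_topEigenspan hA j.isLt
  have hrange : finrank ℂ (LinearMap.range φ) = n := by
    rw [LinearMap.finrank_range_of_inj (toEuclideanLin_injective_of_conjTranspose_mul_self hP),
      finrank_euclideanSpace_fin]
  have hV : finrank ℂ ↥(LinearMap.range φ ⊓ W) ≤ finrank ℂ (W.comap φ) := by
    rw [← map_comap_eq]
    exact finrank_map_le φ _
  have hinf := finrank_add_finrank_le_finrank_inf_add (LinearMap.range φ) W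
  rw [finrank_euclideanSpace_fin] at hinf
  refine le_eigVec_of_le_quadForm hPAP i (V := W.comap φ) (by omega) fun x hx => ?_
  rw [← norm_toEuclideanLin_of_conjTranspose_mul_self hP]
  exact (eigVec_mul_norm_sq_le_quadForm hA j hx).trans_eq
    (quadForm_conjTranspose_mul_mul A P x).symm

theorem eigVec_add_vecMulVec_le {B : Matrix (Fin n) (Fin n) ℂ} (hB : B.IsHermitian)
    (w : Fin n → ℂ) (hM : (B + vecMulVec w (star w)).IsHermitian) {i j : Fin n}
    (hij : (i : ℕ) + 1 ≤ j) : eigVec (B + vecMulVec w (star w)) hM j ≤ eigVec B hB i := by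
  set W := topEigenspan hM (j + 1)
  set H : Submodule ℂ (EuclideanSpace ℂ (Fin n)) := (ℂ ∙ WithLp.toLp 2 w)ᗮ
  have hW : finrank ℂ W = j + 1 := finrank_topEigenspan hM j.isLt
  have hspan : finrank ℂ (ℂ ∙ WithLp.toLp 2 w) ≤ 1 := by
    simpa using finrank_span_le_card ({WithLp.toLp 2 w} : Set (EuclideanSpace ℂ (Fin n)))
  have hperp : finrank ℂ (ℂ ∙ WithLp.toLp 2 w) + finrank ℂ H = n := by
    rw [finrank_add_finrank_orthogonal, finrank_euclideanSpace_fin]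
  have hinf := finrank_add_finrank_le_finrank_inf_add W H
  rw [finrank_euclideanSpace_fin] at hinf
  refine le_eigVec_of_le_quadForm hB i (V := W ⊓ H) (by omega) fun x hx => ?_
  have hwx : star w ⬝ᵥ x = 0 := by
    have := mem_orthogonal_singleton_iff_inner_right.1 hx.2
    rwa [EuclideanSpace.inner_eq_star_dotProduct, dotProduct_comm] at this
  calc eigVec _ hM j * ‖x‖ ^ 2 ≤ quadForm (B + vecMulVec w (star w)) x :=
        eigVec_mul_norm_sq_le_quadForm hM j hx.1
    _ = quadForm B x := by
        rw [quadForm_add, quadForm_vecMulVec, hwx, map_zero, add_zero]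

lemma one_submatrix_conjTranspose_mul_self {f : Fin n → Fin m} (hf : Function.Injective f) :
    ((1 : Matrix (Fin m) (Fin m) ℂ).submatrix id f)ᴴ *
      (1 : Matrix (Fin m) (Fin m) ℂ).submatrix id f = 1 := by
  ext a b
  simp [mul_apply, one_apply, hf.eq_iff]

lemma submatrix_eq_conjTranspose_mul_mul (A : Matrix (Fin m) (Fin m) ℂ) (f : Fin n → Fin m) :
    A.submatrix f f = ((1 : Matrix (Fin m) (Fin m) ℂ).submatrix id f)ᴴ * A *
      (1 : Matrix (Fin m) (Fin m) ℂ).submatrix id f := by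
  ext a b
  simp [mul_apply, one_apply]

theorem eigVec_submatrix_le {A : Matrix (Fin m) (Fin m) ℂ} (hA : A.IsHermitian)
    {f : Fin n → Fin m} (hf : Function.Injective f) {i : Fin n} {j : Fin m}
    (hji : (j : ℕ) ≤ i) : eigVec (A.submatrix f f) (hA.submatrix f) i ≤ eigVec A hA j := by
  have hPAP := submatrix_eq_conjTranspose_mul_mul A f ▸ hA.submatrix f
  rw [eigVec_congr (submatrix_eq_conjTranspose_mul_mul A f) _ hPAP]
  exact eigVec_conjTranspose_mul_mul_le hA (one_submatrix_conjTranspose_mul_self hf) hPAP hji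

theorem eigVec_le_eigVec_submatrix {A : Matrix (Fin m) (Fin m) ℂ} (hA : A.IsHermitian)
    {f : Fin n → Fin m} (hf : Function.Injective f) {i : Fin n} {j : Fin m}
    (hij : (i : ℕ) + m ≤ j + n) :
    eigVec A hA j ≤ eigVec (A.submatrix f f) (hA.submatrix f) i := by
  have hPAP := submatrix_eq_conjTranspose_mul_mul A f ▸ hA.submatrix f
  rw [eigVec_congr (submatrix_eq_conjTranspose_mul_mul A f) _ hPAP]
  exact eigVec_le_eigVec_conjTranspose_mul_mul hA (one_submatrix_conjTranspose_mul_self hf) hPAP hij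

lemma mul_conjTranspose_eq_add_vecMulVec {p : ℕ} (X : Matrix (Fin n) (Fin (p + 1)) ℂ)
    (j : Fin (p + 1)) :
    X * Xᴴ = X.submatrix id j.succAbove * (X.submatrix id j.succAbove)ᴴ +
      vecMulVec (fun a => X a j) (star fun a => X a j) := by
  ext a b
  simp [mul_apply, Fin.sum_univ_succAbove _ j, vecMulVec_apply, add_comm]

end Interlacing

section SingularValues

variable {a b c d : ℕ}

lemma sval_nonneg (Y : Matrix (Fin a) (Fin b) ℂ) (k : ℕ) : 0 ≤ sval Y k := by
  unfold sval
  split_ifs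
  exacts [Real.sqrt_nonneg _, le_rfl]

lemma sval_le_sval_of_eigVec_le {Y : Matrix (Fin a) (Fin b) ℂ} {Z : Matrix (Fin c) (Fin d) ℂ}
    {k l : ℕ} (hkl : k < a → l < c)
    (h : ∀ (hk : k < a) (hl : l < c),
      eigVec (Y * Yᴴ) (isHermitian_mul_conjTranspose_self Y) ⟨k, hk⟩ ≤
        eigVec (Z * Zᴴ) (isHermitian_mul_conjTranspose_self Z) ⟨l, hl⟩) :
    sval Y k ≤ sval Z l := by
  by_cases hk : k < a
  · rw [sval, sval, dif_pos hk, dif_pos (hkl hk)]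
    exact Real.sqrt_le_sqrt (h hk (hkl hk))
  · rw [sval, dif_neg hk]
    exact sval_nonneg Z l

lemma submatrix_mul_conjTranspose_submatrix (X : Matrix (Fin a) (Fin b) ℂ) (f : Fin c → Fin a) :
    X.submatrix f id * (X.submatrix f id)ᴴ = (X * Xᴴ).submatrix f f := by
  rw [conjTranspose_submatrix, submatrix_mul _ _ f id f Function.bijective_id]

theorem sval_submatrix_rows_le (X : Matrix (Fin a) (Fin b) ℂ) {f : Fin c → Fin a}
    (hf : Function.Injective f) (k : ℕ) : sval (X.submatrix f id) k ≤ sval X k := by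
  have hca : c ≤ a := Fin.le_of_injective f hf
  refine sval_le_sval_of_eigVec_le (by omega) fun _ _ => ?_
  rw [eigVec_congr (submatrix_mul_conjTranspose_submatrix X f) _
    ((isHermitian_mul_conjTranspose_self X).submatrix f)]
  exact eigVec_submatrix_le _ hf le_rfl

theorem sval_le_sval_submatrix_rows (X : Matrix (Fin a) (Fin b) ℂ) {f : Fin c → Fin a}
    (hf : Function.Injective f) (hac : a ≤ c + d) (k : ℕ) :
    sval X (k + d) ≤ sval (X.submatrix f id) k := by
  refine sval_le_sval_of_eigVec_le (by omega) fun _ _ => ?_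
  rw [eigVec_congr (submatrix_mul_conjTranspose_submatrix X f) _
    ((isHermitian_mul_conjTranspose_self X).submatrix f)]
  exact eigVec_le_eigVec_submatrix _ hf (by simp only; omega)

theorem sval_submatrix_succAbove_le (X : Matrix (Fin a) (Fin (b + 1)) ℂ) (j : Fin (b + 1))
    (k : ℕ) : sval (X.submatrix id j.succAbove) k ≤ sval X k :=
  sval_le_sval_of_eigVec_le id fun _ _ => eigVec_le_eigVec_of_quadForm_le _ _ (fun x => by
    rw [mul_conjTranspose_eq_add_vecMulVec X j, quadForm_add, quadForm_vecMulVec]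
    exact le_add_of_nonneg_right (Complex.normSq_nonneg _)) _

theorem sval_succ_le_sval_submatrix_succAbove (X : Matrix (Fin a) (Fin (b + 1)) ℂ)
    (j : Fin (b + 1)) (k : ℕ) : sval X (k + 1) ≤ sval (X.submatrix id j.succAbove) k := by
  refine sval_le_sval_of_eigVec_le (by omega) fun _ _ => ?_
  rw [eigVec_congr (mul_conjTranspose_eq_add_vecMulVec X j) _ (by
    rw [← mul_conjTranspose_eq_add_vecMulVec]; exact isHermitian_mul_conjTranspose_self X)]
  exact eigVec_add_vecMulVec_le _ _ _ (by simp)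

end SingularValues

end

theorem stmt_17_general (N : ℕ)
    (X : Matrix (Fin (N + 1)) (Fin (N + 1)) ℂ) (i0 j0 : Fin (N + 1)) :
    (∀ k : ℕ, k < N → sval (X.submatrix i0.succAbove j0.succAbove) k ≤ sval X k) ∧
    (∀ k : ℕ, k + 1 < N → sval X (k + 2) ≤ sval (X.submatrix i0.succAbove j0.succAbove) k) := by
  set Y := X.submatrix i0.succAbove id
  refine ⟨fun k _ => ?_, fun k _ => ?_⟩
  · exact (sval_submatrix_succAbove_le Y j0 k).trans
      (sval_submatrix_rows_le X Fin.succAbove_right_injective k)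
  · exact (sval_le_sval_submatrix_rows X Fin.succAbove_right_injective le_rfl (k + 1)).trans
      (sval_succ_le_sval_submatrix_succAbove Y j0 k)

/-- Thompson interlacing -/
theorem stmt_17 (N : ℕ) (hN : 1 ≤ N)
    (X : Matrix (Fin (N + 1)) (Fin (N + 1)) ℂ) (i0 j0 : Fin (N + 1)) :
    (∀ k : ℕ, k < N → sval (X.submatrix i0.succAbove j0.succAbove) k ≤ sval X k) ∧
    (∀ k : ℕ, k + 1 < N → sval X (k + 2) ≤ sval (X.submatrix i0.succAbove j0.succAbove) k) :=
  stmt_17_general N X i0 j0
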